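/- Let n ≥ 3 be an integer and λ > 0 a real number with λ ≠ n. Then the kernel of M(n,λ) equals the column space of D(λ); in particular, every h ∈ ℝ⁴ with M(n,λ)·h = 0 can be written as h = D(λ)·ω for some ω ∈ ℝ². -/
import Mathlib


open Matrix

/-- The indicial family `I(D Ric − Λ, λ)` (with `Λ = n`) of the linearized Einstein
operator on asymptotically de Sitter space, in the scalar block decomposition. -/
noncomputable def M (n : ℕ) (lam : ℝ) : Matrix (Fin 4) (Fin 4) ℝ :=
  (1 / 2 : ℝ) • !![(n : ℝ) * (lam - 2), 0, -(n : ℝ) * lam * (lam - 2), 0;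
                   0, 0, 0, 0;
                   2 * (n : ℝ) - lam, 0, lam * (lam - 2 * (n : ℝ)), 0;
                   0, 0, 0, lam * (lam - (n : ℝ))]

/-- The indicial family `I(δ*, λ)` of the symmetric gradient acting on one-forms,
in the scalar block decomposition. -/
noncomputable def D (lam : ℝ) : Matrix (Fin 4) (Fin 2) ℝ :=
  !![lam, 0;
     0, (lam + 1) / 2;
     1, 0;
     0, 0]

/-- For `λ > 0`, `λ ≠ n`, the kernel of `I(D Ric − Λ, λ)` equals the range of
`I(δ*, λ)`: every indicial solution of the linearized Einstein equation is pure gauge. -/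
theorem kernel_linearized_einstein_pure_gauge (n : ℕ) (hn : 3 ≤ n) (lam : ℝ)
    (hpos : 0 < lam) (hne : lam ≠ (n : ℝ)) :
    LinearMap.ker (M n lam).mulVecLin = LinearMap.range (D lam).mulVecLin ∧
    ∀ h : Fin 4 → ℝ, (M n lam).mulVec h = 0 →
      ∃ ω : Fin 2 → ℝ, h = (D lam).mulVec ω := by
  have hn3 : (3 : ℝ) ≤ (n : ℝ) := by exact_mod_cast hn
  have key : ∀ h : Fin 4 → ℝ, (M n lam).mulVec h = 0 →
      ∃ ω : Fin 2 → ℝ, h = (D lam).mulVec ω := by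
    intro h hh
    have e0 := congrFun hh 0
    have e2 := congrFun hh 2
    have e3 := congrFun hh 3
    simp [M, Matrix.mulVec, dotProduct, Fin.sum_univ_succ] at e0 e2 e3
    have h3 : h 3 = 0 := by
      have hl : lam * (lam - n) ≠ 0 :=
        mul_ne_zero (ne_of_gt hpos) (sub_ne_zero.mpr hne)
      rcases e3 with (e3 | e3) | e3
      · exact absurd e3 (ne_of_gt hpos)
      · exact absurd e3 (sub_ne_zero.mpr hne)
      · exact e3
    have h02 : h 0 = lam * h 2 := by
      by_cases h2n : lam = 2 * n
      · -- use equation e0 : n(λ-2) h0 - nλ(λ-2) h2 = 0, with λ-2 = 2n-2 ≠ 0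
        have hne2 : lam - 2 ≠ 0 := by
          rw [h2n]; nlinarith
        have hnn : (n : ℝ) ≠ 0 := by positivity
        have : (n : ℝ) * (lam - 2) * (h 0 - lam * h 2) = 0 := by nlinarith [e0]
        have := (mul_eq_zero.mp this).resolve_left (mul_ne_zero hnn hne2)
        linarith [sub_eq_zero.mp this]
      · have hne2n : 2 * (n : ℝ) - lam ≠ 0 := by
          intro hc; apply h2n; linarith
        have : (2 * (n : ℝ) - lam) * (h 0 - lam * h 2) = 0 := by nlinarith [e2]
        have := (mul_eq_zero.mp this).resolve_left hne2n
        linarith [sub_eq_zero.mp this]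
    refine ⟨![h 2, 2 * h 1 / (lam + 1)], ?_⟩
    have hl1 : lam + 1 ≠ 0 := by positivity
    funext i
    fin_cases i <;>
      simp [D, Matrix.mulVec, dotProduct, Fin.sum_univ_succ, h02, h3] <;>
      field_simp <;> ring
  refine ⟨?_, key⟩
  apply le_antisymm
  · intro h hh
    obtain ⟨ω, hω⟩ := key h (by simpa using hh)
    exact ⟨ω, hω.symm⟩
  · rintro h ⟨ω, rfl⟩
    simp only [LinearMap.mem_ker, mulVecLin_apply]
    funext i
    fin_cases i <;>
      simp [M, D, Matrix.mulVec, dotProduct, Fin.sum_univ_succ] <;> ring
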